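/- With the notation above, the positive root u(y) of c₂(y)u² + c₁(y)u + c₀ = 0 is a strictly increasing function of y on [0,∞), and u(y) → (N-1)/(N-2n-1) as y → ∞. -/

import Mathlib

/-- `tanh'(y)`. -/
noncomputable def tanhD (y : ℝ) : ℝ := deriv Real.tanh y

/-- The coefficient `c₂(y)` of the quadratic for `u`. -/
noncomputable def c2 (N n y : ℝ) : ℝ := (n + 1 + (n - 1) / (N - 2 * n)) * tanhD y

/-- The coefficient `c₁(y)` of the quadratic for `u`. -/
noncomputable def c1 (N n y : ℝ) : ℝ :=
  (N - 2 * n - 1) * (N - n - 1) / (N - 2 * n) + (N - 1) * (n - 1) * tanhD y / (N - 2 * n)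

/-- The constant coefficient `c₀`. -/
noncomputable def c0 (N n : ℝ) : ℝ := -((N - n - 1) * (N - 1) / (N - 2 * n))

/-- The positive root `u(y)` of `c₂u² + c₁u + c₀ = 0`. -/
noncomputable def uRoot (N n y : ℝ) : ℝ :=
  (-(c1 N n y) + Real.sqrt ((c1 N n y) ^ 2 - 4 * c2 N n y * c0 N n)) / (2 * c2 N n y)

/-- The quantity `c(y)` from the cubic reduction. -/
noncomputable def cFun (N n y : ℝ) : ℝ :=
  (n - 1) / (N - 2 * n) * tanhD y - (N - n - 1) / ((N - 2 * n) * uRoot N n y)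

/-- The quantity `a(y)` from the cubic reduction. -/
noncomputable def aFun (N n y : ℝ) : ℝ :=
  (n - 1) / (N - 2 * n) * iteratedDeriv 3 Real.tanh y / 6

/-- The quantity `b(y)` from the cubic reduction. -/
noncomputable def bFun (N n y : ℝ) : ℝ :=
  (n - 1) / (N - 2 * n) * iteratedDeriv 2 Real.tanh y / 2

/-- The cubic coefficient `λ₃(y, N, n)` at the bifurcation. -/
noncomputable def lam3 (N n y : ℝ) : ℝ :=
  -(N - 1) / 3 + n * (N - n - 1) / (n - 1) *
    (2 * aFun N n y * cFun N n y - 4 * (bFun N n y) ^ 2) / (cFun N n y) ^ 5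

/-!
In the rationalized form `u = -2c₀ / (c₁ + √(c₁² - 4c₂c₀))` the root no longer degenerates as
`c₂ → 0`. With `c₀ < 0` fixed it strictly decreases when `c₂` and `c₁ > 0` increase, and both
coefficients are increasing affine functions of `tanh' y = cosh⁻² y`, which decreases strictly to
`0` on `[0, ∞)`. Hence `u` increases strictly, towards `-c₀ / c₁(∞) = (N-1)/(N-2n-1)`.
-/

open Real Filter Set Topology

theorem Real.hasDerivAt_tanh (x : ℝ) : HasDerivAt tanh (cosh x ^ 2)⁻¹ x := by
  have h := (hasDerivAt_sinh x).div (hasDerivAt_cosh x) (cosh_pos x).ne'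
  rw [show sinh / cosh = tanh from funext fun y => (tanh_eq_sinh_div_cosh y).symm] at h
  refine h.congr_deriv ?_
  rw [← sq, ← sq, cosh_sq_sub_sinh_sq, one_div]

lemma tanhD_eq_inv_cosh_sq (y : ℝ) : tanhD y = (cosh y ^ 2)⁻¹ :=
  (hasDerivAt_tanh y).deriv

lemma tanhD_pos (y : ℝ) : 0 < tanhD y := by
  rw [tanhD_eq_inv_cosh_sq]
  positivity

lemma strictAntiOn_tanhD : StrictAntiOn tanhD (Ici 0) := by
  intro a ha b hb hab
  rw [tanhD_eq_inv_cosh_sq, tanhD_eq_inv_cosh_sq]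
  have hcosh : cosh a < cosh b := by
    rwa [cosh_lt_cosh, abs_of_nonneg ha, abs_of_nonneg hb]
  gcongr

lemma tendsto_tanhD_atTop : Tendsto tanhD atTop (𝓝 0) := by
  have hcosh_sq : Tendsto (fun y => cosh y ^ 2) atTop atTop := by
    refine tendsto_atTop_mono (fun y => ?_) (tendsto_exp_atTop.atTop_div_const two_pos)
    have h1 := one_le_cosh y
    have h2 : exp y / 2 ≤ cosh y := by
      rw [cosh_eq]
      linarith [exp_pos (-y)]
    nlinarith
  rw [funext tanhD_eq_inv_cosh_sq]
  exact tendsto_inv_atTop_zero.comp hcosh_sq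

lemma quadratic_root_eq_rationalized {a b c : ℝ} (ha : a ≠ 0) (hb : 0 < b)
    (hd : 0 ≤ discrim a b c) :
    (-b + √(discrim a b c)) / (2 * a) = -2 * c / (b + √(discrim a b c)) := by
  have hs : √(discrim a b c) ^ 2 = b ^ 2 - 4 * a * c := sq_sqrt hd
  have hden : 0 < b + √(discrim a b c) := by positivity
  rw [div_eq_div_iff (by positivity) hden.ne']
  linear_combination hs

lemma rationalized_root_lt {a a' b b' c : ℝ} (hc : c < 0) (haa' : a ≤ a')
    (hb : 0 < b) (hbb' : b < b') :
    -2 * c / (b' + √(discrim a' b' c)) < -2 * c / (b + √(discrim a b c)) := by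
  have hd : discrim a b c ≤ discrim a' b' c := by
    unfold discrim
    nlinarith
  have hs := sqrt_le_sqrt hd
  exact div_lt_div_of_pos_left (by linarith) (by positivity) (by linarith)

lemma tendsto_rationalized_root {α : Type*} {l : Filter α} {a b : α → ℝ} {b₀ : ℝ} (c : ℝ)
    (ha : Tendsto a l (𝓝 0)) (hb : Tendsto b l (𝓝 b₀)) (hb₀ : 0 < b₀) :
    Tendsto (fun x => -2 * c / (b x + √(discrim (a x) (b x) c))) l (𝓝 (-c / b₀)) := by
  have hd : Tendsto (fun x => discrim (a x) (b x) c) l (𝓝 (b₀ ^ 2)) := by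
    simpa [discrim] using (hb.pow 2).sub ((ha.const_mul 4).mul_const c)
  have hden := hb.add hd.sqrt
  rw [sqrt_sq hb₀.le] at hden
  have h := (tendsto_const_nhds (x := -2 * c)).div hden (by positivity)
  rwa [show -2 * c / (b₀ + b₀) = -c / b₀ by field_simp; ring] at h

section Coefficients

variable {N n : ℝ}

lemma c0_neg (hn : 0 < n) (hN : 2 * n + 1 < N) : c0 N n < 0 := by
  have : 0 < (N - n - 1) * (N - 1) / (N - 2 * n) :=
    div_pos (mul_pos (by linarith) (by linarith)) (by linarith)
  rw [c0]
  linarith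

lemma c2_pos (hn : 1 < n) (hN : 2 * n < N) (y : ℝ) : 0 < c2 N n y :=
  mul_pos (by have := div_pos (sub_pos.2 hn) (sub_pos.2 hN); linarith) (tanhD_pos y)

lemma strictAntiOn_c2 (hn : 1 < n) (hN : 2 * n < N) : StrictAntiOn (c2 N n) (Ici 0) := by
  have : 0 < n + 1 + (n - 1) / (N - 2 * n) := by
    have := div_pos (sub_pos.2 hn) (sub_pos.2 hN); linarith
  exact fun y hy y' hy' h => mul_lt_mul_of_pos_left (strictAntiOn_tanhD hy hy' h) this

lemma c1_pos (hn : 1 < n) (hN : 2 * n + 1 < N) (y : ℝ) : 0 < c1 N n y := by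
  have hM : 0 < N - 2 * n := by linarith
  exact add_pos (div_pos (mul_pos (by linarith) (by linarith)) hM)
    (div_pos (mul_pos (mul_pos (by linarith) (by linarith)) (tanhD_pos y)) hM)

lemma strictAntiOn_c1 (hn : 1 < n) (hN : 2 * n + 1 < N) : StrictAntiOn (c1 N n) (Ici 0) := by
  intro y hy y' hy' h
  have hM : 0 < N - 2 * n := by linarith
  have hC : 0 < (N - 1) * (n - 1) := mul_pos (by linarith) (by linarith)
  have := strictAntiOn_tanhD hy hy' h
  unfold c1
  gcongr

lemma tendsto_c2_atTop : Tendsto (c2 N n) atTop (𝓝 0) := by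
  have h := tendsto_tanhD_atTop.const_mul (n + 1 + (n - 1) / (N - 2 * n))
  rwa [mul_zero] at h

lemma tendsto_c1_atTop :
    Tendsto (c1 N n) atTop (𝓝 ((N - 2 * n - 1) * (N - n - 1) / (N - 2 * n))) := by
  have h := (tendsto_const_nhds (x := (N - 2 * n - 1) * (N - n - 1) / (N - 2 * n))).add
    ((tendsto_tanhD_atTop.const_mul ((N - 1) * (n - 1))).div_const (N - 2 * n))
  rwa [mul_zero, zero_div, add_zero] at h

lemma uRoot_eq_rationalized (hn : 1 < n) (hN : 2 * n + 1 < N) (y : ℝ) :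
    uRoot N n y = -2 * c0 N n / (c1 N n y + √(discrim (c2 N n y) (c1 N n y) (c0 N n))) := by
  have hd : 0 ≤ discrim (c2 N n y) (c1 N n y) (c0 N n) := by
    have := c2_pos hn (by linarith) y
    have := c0_neg (by linarith) hN
    unfold discrim
    nlinarith
  exact quadratic_root_eq_rationalized (c2_pos hn (by linarith) y).ne' (c1_pos hn hN y) hd

end Coefficients

/-- The positive root `u(y)` is strictly increasing on `[0,∞)` and tends to
`(N-1)/(N-2n-1)` as `y → ∞`. -/
theorem stmt_6 (N n : ℤ) (hn : 2 ≤ n) (hnN : 2 * n + 1 < N) :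
    StrictMonoOn (fun y : ℝ => uRoot (N : ℝ) (n : ℝ) y) (Set.Ici (0 : ℝ)) ∧
    Filter.Tendsto (fun y : ℝ => uRoot (N : ℝ) (n : ℝ) y) Filter.atTop
      (nhds (((N : ℝ) - 1) / ((N : ℝ) - 2 * (n : ℝ) - 1))) := by
  have hn' : (1 : ℝ) < n := by exact_mod_cast hn
  have hN' : 2 * (n : ℝ) + 1 < N := by exact_mod_cast hnN
  simp only [uRoot_eq_rationalized hn' hN']
  refine ⟨fun y hy y' hy' h => ?_, ?_⟩
  · exact rationalized_root_lt (c0_neg (by linarith) hN')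
      (strictAntiOn_c2 hn' (by linarith) hy hy' h).le (c1_pos hn' hN' y')
      (strictAntiOn_c1 hn' hN' hy hy' h)
  · have hB : 0 < ((N : ℝ) - 2 * n - 1) * (N - n - 1) / (N - 2 * n) :=
      div_pos (mul_pos (by linarith) (by linarith)) (by linarith)
    convert tendsto_rationalized_root (c0 N n) tendsto_c2_atTop tendsto_c1_atTop hB using 2
    have hM : (N : ℝ) - 2 * n ≠ 0 := by linarith
    have hN1 : (N : ℝ) - n - 1 ≠ 0 := by linarith
    rw [c0, neg_neg]
    field_simp
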